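/- arXiv:2312.02943 — 8 statements merged into one kernel-verified Lean document; each statement's English description precedes it below -/
import Mathlib

section
/- Let γ ∈ (0,1)∪(1,∞), θ, σ_y, μ_y ∈ ℝ, and ρ, r, m > 0 with ρ + m > (1-γ)r + ((1-γ)/(2γ))θ² (so K := (1/γ)(ρ + m − (1-γ)r − ((1-γ)/(2γ))θ²) > 0), and assume κ := r − μ_y + σ_y θ > 0, l > 0, B > 0. Define Q̂(z,y) := (γ/((1-γ)K))·z^{(γ-1)/γ} + z·y/κ + m·(lB)^{1-γ}/((1-γ)(ρ+m)) and û(z) := (γ/(1-γ))·z^{(γ-1)/γ}. Then Q̂ is twice continuously differentiable on (0,∞)², and for all z > 0, y > 0: (1/2)θ²z²·∂²Q̂/∂z² + (ρ−r+m)z·∂Q̂/∂z + (1/2)σ_y²y²·∂²Q̂/∂y² + μ_y y·∂Q̂/∂y − θσ_y z y·∂²Q̂/∂z∂y − (ρ+m)·Q̂(z,y) = −( û(z) + m·(lB)^{1-γ}/(1-γ) + z·y ). -/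
open Real Set Filter Topology

/-!
`Q̂` is the sum of `A z^p` with `p = (γ-1)/γ`, the bilinear term `zy/κ` and a constant, and
each of the three is an eigenfunction of `L`: `z^p` with eigenvalue
`½θ²p(p-1) + (ρ-r+m)p - (ρ+m) = -K` (the Merton rate), `zy` with eigenvalue `-κ`, and
constants with eigenvalue `-(ρ+m)`. The normalisations `A = γ/((1-γ)K)` and `1/κ` are chosen
so that these produce exactly `-û(z)`, `-zy` and `-m u(lB)`.
-/

/-- The operator `L` of the paper, with the second and mixed partial derivatives taken as
iterated one-variable `deriv`s. -/
noncomputable def dualGenerator (θ σy μy ρ r m : ℝ) (f : ℝ → ℝ → ℝ) (z y : ℝ) : ℝ :=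
  (1/2)*θ^2*z^2 * deriv (fun z' => deriv (fun z'' => f z'' y) z') z
    + (ρ - r + m)*z * deriv (fun z' => f z' y) z
    + (1/2)*σy^2*y^2 * deriv (fun y' => deriv (fun y'' => f z y'') y') y
    + μy*y * deriv (fun y' => f z y') y
    - θ*σy*z*y * deriv (fun y' => deriv (fun z' => f z' y') z) y
    - (ρ+m) * f z y

noncomputable def dualValue (A p κ C z y : ℝ) : ℝ := A * z ^ p + z * y / κ + C

section DualValue

variable (A p κ C : ℝ)

theorem contDiffOn_dualValue {n : WithTop ℕ∞} :
    ContDiffOn ℝ n (fun q : ℝ × ℝ => dualValue A p κ C q.1 q.2) {q | q.1 ≠ 0} := fun q hq =>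
  (((contDiffAt_const.mul ((contDiffAt_rpow_const_of_ne hq).comp q contDiffAt_fst)).add
      ((contDiffAt_fst.mul contDiffAt_snd).div_const κ)).add
    contDiffAt_const).contDiffWithinAt

theorem hasDerivAt_dualValue_fst {z : ℝ} (hz : z ≠ 0) (y : ℝ) :
    HasDerivAt (fun z => dualValue A p κ C z y) (A * p * z ^ (p - 1) + y / κ) z :=
  ((((hasDerivAt_rpow_const (p := p) (Or.inl hz)).const_mul A).add
    (((hasDerivAt_id z).mul_const y).div_const κ)).add_const C).congr_deriv (by ring)

theorem hasDerivAt_dualValue_snd (z y : ℝ) :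
    HasDerivAt (fun y => dualValue A p κ C z y) (z / κ) y :=
  (((((hasDerivAt_id y).const_mul z).div_const κ).const_add (A * z ^ p)).add_const
    C).congr_deriv (by ring)

theorem deriv_deriv_dualValue_fst {z : ℝ} (hz : z ≠ 0) (y : ℝ) :
    deriv (fun z' => deriv (fun z'' => dualValue A p κ C z'' y) z') z
      = A * p * (p - 1) * z ^ (p - 2) := by
  have hfirst : (fun z' => deriv (fun z'' => dualValue A p κ C z'' y) z')
      =ᶠ[𝓝 z] fun z' => A * p * z' ^ (p - 1) + y / κ :=
    (eventually_ne_nhds hz).mono fun z' hz' => (hasDerivAt_dualValue_fst A p κ C hz' y).deriv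
  rw [hfirst.deriv_eq, (((hasDerivAt_rpow_const (p := p - 1) (Or.inl hz)).const_mul
    (A * p)).add_const (y / κ)).deriv, show p - 1 - 1 = p - 2 by ring]
  ring

theorem deriv_deriv_dualValue_snd (z y : ℝ) :
    deriv (fun y' => deriv (fun y'' => dualValue A p κ C z y'') y') y = 0 := by
  simp only [fun y' => (hasDerivAt_dualValue_snd A p κ C z y').deriv, deriv_const]

theorem deriv_snd_deriv_fst_dualValue {z : ℝ} (hz : z ≠ 0) (y : ℝ) :
    deriv (fun y' => deriv (fun z' => dualValue A p κ C z' y') z) y = 1 / κ := by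
  simp only [fun y' => (hasDerivAt_dualValue_fst A p κ C hz y').deriv]
  exact (((hasDerivAt_id y).div_const κ).const_add _).deriv

theorem dualGenerator_dualValue (θ σy μy ρ r m : ℝ) {z : ℝ} (hz : z ≠ 0) (y : ℝ) :
    dualGenerator θ σy μy ρ r m (dualValue A p κ C) z y
      = ((1/2)*θ^2*(p*(p-1)) + (ρ - r + m)*p - (ρ+m)) * A * z ^ p
        - (r - μy + σy*θ) * (z * y / κ) - (ρ+m) * C := by
  have hz1 : z * z ^ (p - 1) = z ^ p := by
    rw [rpow_sub_one hz]; field_simp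
  have hz2 : z ^ 2 * z ^ (p - 2) = z ^ p := by
    rw [show p - 2 = p - 1 - 1 by ring, rpow_sub_one hz, rpow_sub_one hz]; field_simp
  rw [dualGenerator, deriv_deriv_dualValue_fst A p κ C hz,
    (hasDerivAt_dualValue_fst A p κ C hz y).deriv, deriv_deriv_dualValue_snd,
    (hasDerivAt_dualValue_snd A p κ C z y).deriv,
    deriv_snd_deriv_fst_dualValue A p κ C hz, dualValue]
  linear_combination ((1/2)*θ^2*A*p*(p-1)) * hz2 + ((ρ - r + m)*A*p) * hz1

end DualValue

theorem eigenvalue_merton_exponent (γ θ ρ r m : ℝ) (hγ : γ ≠ 0) :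
    (1/2)*θ^2*(((γ-1)/γ)*((γ-1)/γ-1)) + (ρ - r + m)*((γ-1)/γ) - (ρ+m)
      = -((1/γ) * (ρ + m - (1-γ)*r - ((1-γ)/(2*γ))*θ^2)) := by
  field_simp
  ring

theorem stmt_5_general (γ θ σy μy ρ r m κ K l B : ℝ)
    (hγ0 : 0 < γ) (hγ1 : γ ≠ 1) (hρ : 0 < ρ) (hm : 0 < m)
    (hassume : (1-γ)*r + ((1-γ)/(2*γ))*θ^2 < ρ + m)
    (hK : K = (1/γ) * (ρ + m - (1-γ)*r - ((1-γ)/(2*γ))*θ^2))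
    (hκ : κ = r - μy + σy*θ) (hκ0 : 0 < κ)
    (Q : ℝ → ℝ → ℝ)
    (hQ : ∀ z y : ℝ, Q z y = (γ/((1-γ)*K)) * z^((γ-1)/γ) + z*y/κ
        + m*(l*B)^(1-γ)/((1-γ)*(ρ+m))) :
    ContDiffOn ℝ 2 (fun p : ℝ × ℝ => Q p.1 p.2) (Set.Ioi 0 ×ˢ Set.Ioi 0) ∧
    ∀ z y : ℝ, 0 < z → 0 < y →
      (1/2)*θ^2*z^2 * deriv (fun z' => deriv (fun z'' => Q z'' y) z') z
      + (ρ - r + m)*z * deriv (fun z' => Q z' y) z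
      + (1/2)*σy^2*y^2 * deriv (fun y' => deriv (fun y'' => Q z y'') y') y
      + μy*y * deriv (fun y' => Q z y') y
      - θ*σy*z*y * deriv (fun y' => deriv (fun z' => Q z' y') z) y
      - (ρ+m) * Q z y
      = -((γ/(1-γ))*z^((γ-1)/γ) + m*(l*B)^(1-γ)/(1-γ) + z*y) := by
  obtain rfl : Q = dualValue (γ/((1-γ)*K)) ((γ-1)/γ) κ (m*(l*B)^(1-γ)/((1-γ)*(ρ+m))) :=
    funext fun z => funext (hQ z)
  refine ⟨(contDiffOn_dualValue _ _ _ _).mono fun q hq => hq.1.ne', fun z y hz _ => ?_⟩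
  have hK0 : K ≠ 0 := by
    rw [hK]; exact (mul_pos (by positivity) (by linarith)).ne'
  have h1γ : 1 - γ ≠ 0 := sub_ne_zero.mpr hγ1.symm
  have hρm : ρ + m ≠ 0 := by positivity
  change dualGenerator θ σy μy ρ r m _ z y = _
  rw [dualGenerator_dualValue (hz := hz.ne'), eigenvalue_merton_exponent (hγ := hγ0.ne'), ← hK,
    ← hκ]
  field_simp
  ring

/-- Proposition 3.1: the explicit dual function `Q̂` is `C²` on `(0,∞)²` and solves
`−LQ̂ = û + m·u(lB) + zy`. -/
theorem stmt_5 (γ θ σy μy ρ r m κ K l B : ℝ)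
    (hγ0 : 0 < γ) (hγ1 : γ ≠ 1) (hρ : 0 < ρ) (hr : 0 < r) (hm : 0 < m)
    (hassume : (1-γ)*r + ((1-γ)/(2*γ))*θ^2 < ρ + m)
    (hK : K = (1/γ) * (ρ + m - (1-γ)*r - ((1-γ)/(2*γ))*θ^2))
    (hκ : κ = r - μy + σy*θ) (hκ0 : 0 < κ) (hl : 0 < l) (hB : 0 < B)
    (Q : ℝ → ℝ → ℝ)
    (hQ : ∀ z y : ℝ, Q z y = (γ/((1-γ)*K)) * z^((γ-1)/γ) + z*y/κ
        + m*(l*B)^(1-γ)/((1-γ)*(ρ+m))) :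
    ContDiffOn ℝ 2 (fun p : ℝ × ℝ => Q p.1 p.2) (Set.Ioi 0 ×ˢ Set.Ioi 0) ∧
    ∀ z y : ℝ, 0 < z → 0 < y →
      (1/2)*θ^2*z^2 * deriv (fun z' => deriv (fun z'' => Q z'' y) z') z
      + (ρ - r + m)*z * deriv (fun z' => Q z' y) z
      + (1/2)*σy^2*y^2 * deriv (fun y' => deriv (fun y'' => Q z y'') y') y
      + μy*y * deriv (fun y' => Q z y') y
      - θ*σy*z*y * deriv (fun y' => deriv (fun z' => Q z' y') z) y
      - (ρ+m) * Q z y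
      = -((γ/(1-γ))*z^((γ-1)/γ) + m*(l*B)^(1-γ)/(1-γ) + z*y) :=
  stmt_5_general γ θ σy μy ρ r m κ K l B hγ0 hγ1 hρ hm hassume hK hκ hκ0 Q hQ
end

section
/- Under the hypotheses of Proposition 3.1 (γ ∈ (0,1)∪(1,∞), ρ, r, m > 0 with K > 0, κ := r − μ_y + σ_yθ > 0, l, B > 0), let h ∈ ℝ and define G(z,y) := Q̂(z,y) − z·h/r, where Q̂(z,y) = (γ/((1-γ)K))·z^{(γ-1)/γ} + z·y/κ + m·(lB)^{1-γ}/((1-γ)(ρ+m)). Then for all z > 0, y > 0: (1/2)θ²z²·∂²G/∂z² + (ρ−r+m)z·∂G/∂z + (1/2)σ_y²y²·∂²G/∂y² + μ_y y·∂G/∂y − θσ_y zy·∂²G/∂z∂y − (ρ+m)·G(z,y) = −û(z) − m·(lB)^{1-γ}/(1-γ) − z·y + z·h, where û(z) = (γ/(1-γ))·z^{(γ-1)/γ}. -/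
/-!
On `z > 0` the operator `L` maps each term of `A z^p + a z y + b z + c` to a multiple of itself:
`z^p ↦ ψ(p) z^p` with `ψ(p) = ½θ²p(p-1) + (ρ-r+m)p - (ρ+m)`, `zy ↦ -κ zy`, `z ↦ -r z` and
constants `c ↦ -(ρ+m) c`. The constant `K` is defined so that `ψ((γ-1)/γ) = -K`, hence the
coefficient `γ/((1-γ)K)` of `z^((γ-1)/γ)` in `Q̂` is sent to `-γ/(1-γ)`, the coefficient of `û`.
-/

open Real Set

noncomputable def generator (θ σy μy ρ r m : ℝ) (f : ℝ → ℝ → ℝ) (z y : ℝ) : ℝ :=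
  (1/2)*θ^2*z^2 * deriv (fun z' => deriv (fun z'' => f z'' y) z') z
    + (ρ - r + m)*z * deriv (fun z' => f z' y) z
    + (1/2)*σy^2*y^2 * deriv (fun y' => deriv (fun y'' => f z y'') y') y
    + μy*y * deriv (fun y' => f z y') y
    - θ*σy*z*y * deriv (fun y' => deriv (fun z' => f z' y') z) y
    - (ρ+m) * f z y

noncomputable def indicialPoly (θ ρ r m p : ℝ) : ℝ :=
  (1/2)*θ^2*(p*(p-1)) + (ρ-r+m)*p - (ρ+m)

theorem indicialPoly_dual_exponent {γ : ℝ} (hγ : γ ≠ 0) (θ ρ r m : ℝ) :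
    indicialPoly θ ρ r m ((γ-1)/γ) = -((1/γ) * (ρ + m - (1-γ)*r - ((1-γ)/(2*γ))*θ^2)) := by
  unfold indicialPoly
  field_simp
  ring

section PowerAffine

variable (A p a b c : ℝ)

theorem hasDerivAt_powerAffine_fst (y : ℝ) {z : ℝ} (hz : z ≠ 0) :
    HasDerivAt (fun z => A * z^p + a*z*y + b*z + c) (A*(p*z^(p-1)) + a*y + b) z := by
  have h := (((Real.hasDerivAt_rpow_const (p := p) (Or.inl hz)).const_mul A).add
    ((hasDerivAt_id' z).mul_const (a*y))).add ((hasDerivAt_id' z).mul_const b) |>.add_const c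
  rw [show (fun z => A * z^p + a*z*y + b*z + c) = fun x => A*x^p + x*(a*y) + x*b + c by
    funext; ring]
  exact h.congr_deriv (by ring)

theorem deriv_deriv_powerAffine_fst (y : ℝ) {z : ℝ} (hz : z ≠ 0) :
    deriv (fun z' => deriv (fun z'' => A * z''^p + a*z''*y + b*z'' + c) z') z
      = A*(p*((p-1)*z^(p-1-1))) := by
  have hev : (fun z' => deriv (fun z'' => A * z''^p + a*z''*y + b*z'' + c) z')
      =ᶠ[nhds z] fun z' => A*(p*z'^(p-1)) + a*y + b := by
    filter_upwards [eventually_ne_nhds hz] with w hw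
    exact (hasDerivAt_powerAffine_fst A p a b c y hw).deriv
  rw [hev.deriv_eq]
  simp [Real.deriv_rpow_const, Real.differentiableAt_rpow_const_of_ne (p - 1) hz]

theorem generator_powerAffine (θ σy μy ρ r m y : ℝ) {z : ℝ} (hz : z ≠ 0) :
    generator θ σy μy ρ r m (fun z y => A * z^p + a*z*y + b*z + c) z y
      = indicialPoly θ ρ r m p * A * z^p
        + (μy - θ*σy - r)*a*z*y - r*b*z - (ρ+m)*c := by
  simp only [generator, indicialPoly, deriv_deriv_powerAffine_fst A p a b c y hz,
    (hasDerivAt_powerAffine_fst A p a b c _ hz).deriv]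
  simp only [deriv_add_const', differentiableAt_const, deriv_const_add', deriv_const_mul_id',
    deriv_fun_mul, deriv_const', zero_mul, mul_zero, add_zero]
  simp only [Real.rpow_sub_one hz]
  field_simp
  ring

end PowerAffine

theorem stmt_7_general (γ θ σy μy ρ r m κ K l B h : ℝ)
    (hγ0 : 0 < γ) (hρ : 0 < ρ) (hr : 0 < r) (hm : 0 < m)
    (hassume : (1-γ)*r + ((1-γ)/(2*γ))*θ^2 < ρ + m)
    (hK : K = (1/γ) * (ρ + m - (1-γ)*r - ((1-γ)/(2*γ))*θ^2))
    (hκ : κ = r - μy + σy*θ) (hκ0 : 0 < κ)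
    (G : ℝ → ℝ → ℝ)
    (hG : ∀ z y : ℝ, G z y = (γ/((1-γ)*K)) * z^((γ-1)/γ) + z*y/κ
        + m*(l*B)^(1-γ)/((1-γ)*(ρ+m)) - z*h/r) :
    ∀ z y : ℝ, 0 < z → 0 < y →
      (1/2)*θ^2*z^2 * deriv (fun z' => deriv (fun z'' => G z'' y) z') z
      + (ρ - r + m)*z * deriv (fun z' => G z' y) z
      + (1/2)*σy^2*y^2 * deriv (fun y' => deriv (fun y'' => G z y'') y') y
      + μy*y * deriv (fun y' => G z y') y
      - θ*σy*z*y * deriv (fun y' => deriv (fun z' => G z' y') z) y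
      - (ρ+m) * G z y
      = -((γ/(1-γ))*z^((γ-1)/γ)) - m*(l*B)^(1-γ)/(1-γ) - z*y + z*h := by
  intro z y hz _
  have hK0 : K ≠ 0 := by
    have : 0 < ρ + m - (1-γ)*r - ((1-γ)/(2*γ))*θ^2 := by linarith
    rw [hK]
    positivity
  have hρm : ρ + m ≠ 0 := by positivity
  have hG_eq : G = fun z y => (γ/((1-γ)*K)) * z^((γ-1)/γ) + (1/κ)*z*y + (-(h/r))*z
      + m*(l*B)^(1-γ)/((1-γ)*(ρ+m)) := by
    funext z y
    rw [hG]
    ring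
  change generator θ σy μy ρ r m G z y = _
  rw [hG_eq, generator_powerAffine _ _ _ _ _ θ σy μy ρ r m y hz.ne',
    indicialPoly_dual_exponent hγ0.ne', ← hK]
  field_simp
  rw [hκ]
  ring

/-- The key reduction identity: with `G(z,y) := Q̂(z,y) − zh/r` one has
`LG = −û − m·u(lB) − zy + zh` on `(0,∞)²`. -/
theorem stmt_7 (γ θ σy μy ρ r m κ K l B h : ℝ)
    (hγ0 : 0 < γ) (hγ1 : γ ≠ 1) (hρ : 0 < ρ) (hr : 0 < r) (hm : 0 < m)
    (hassume : (1-γ)*r + ((1-γ)/(2*γ))*θ^2 < ρ + m)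
    (hK : K = (1/γ) * (ρ + m - (1-γ)*r - ((1-γ)/(2*γ))*θ^2))
    (hκ : κ = r - μy + σy*θ) (hκ0 : 0 < κ) (hl : 0 < l) (hB : 0 < B)
    (G : ℝ → ℝ → ℝ)
    (hG : ∀ z y : ℝ, G z y = (γ/((1-γ)*K)) * z^((γ-1)/γ) + z*y/κ
        + m*(l*B)^(1-γ)/((1-γ)*(ρ+m)) - z*h/r) :
    ∀ z y : ℝ, 0 < z → 0 < y →
      (1/2)*θ^2*z^2 * deriv (fun z' => deriv (fun z'' => G z'' y) z') z
      + (ρ - r + m)*z * deriv (fun z' => G z' y) z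
      + (1/2)*σy^2*y^2 * deriv (fun y' => deriv (fun y'' => G z y'') y') y
      + μy*y * deriv (fun y' => G z y') y
      - θ*σy*z*y * deriv (fun y' => deriv (fun z' => G z' y') z) y
      - (ρ+m) * G z y
      = -((γ/(1-γ))*z^((γ-1)/γ)) - m*(l*B)^(1-γ)/(1-γ) - z*y + z*h :=
  stmt_7_general γ θ σy μy ρ r m κ K l B h hγ0 hρ hr hm hassume hK hκ hκ0 G hG
end

section
/- Let h > 0, r > 0, ρ + m > 0, α₁ < 0, G₀ > 0, b := G₀·r·α₁/((ρ+m)·h·(α₁−1)) and C₁ := −(h/(r·α₁))·b^{1−α₁}. Define ŵ(z) := C₁·z^{α₁} + h·z/r − G₀/(ρ+m) for z > 0. Then ŵ(b) = 0, ŵ'(b) = 0, ŵ''(z) > 0 for all z > 0, and ŵ(z) ≥ 0 for all z ≥ b. -/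
/-!
Write `ŵ z = C₁ z^{α₁} + k z − c` with `k = h/r`, `c = G₀/(ρ+m)`. The constant `C₁`
is chosen so that `C₁ α₁ b^{α₁-1} = −k`, i.e. `ŵ' b = 0`, and then `C₁ b^{α₁} = −k b / α₁`, so the
choice of `b` is exactly what makes `ŵ b = 0`. Since `C₁ > 0` and `α₁ < 0`, the term
`C₁ α₁ z^{α₁-1}` is increasing in `z`, so `ŵ' ≥ ŵ' b = 0` on `[b, ∞)` and `ŵ ≥ ŵ b = 0` there;
likewise `ŵ'' z = C₁ α₁ (α₁ − 1) z^{α₁-2} > 0`.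
-/

open Real Set

noncomputable section

def dualCandidate (C α k c z : ℝ) : ℝ := C * z ^ α + k * z - c

namespace dualCandidate

variable {C α k c b z : ℝ}

theorem hasDerivAt (hz : z ≠ 0) :
    HasDerivAt (dualCandidate C α k c) (C * α * z ^ (α - 1) + k) z := by
  have hpow := (hasDerivAt_rpow_const (p := α) (Or.inl hz)).const_mul C
  have hlin := (hasDerivAt_id' z).const_mul k
  exact ((hpow.add hlin).sub_const c).congr_deriv (by ring)

theorem deriv_eq (hz : z ≠ 0) : deriv (dualCandidate C α k c) z = C * α * z ^ (α - 1) + k :=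
  (hasDerivAt hz).deriv

theorem deriv_deriv_pos (hC : 0 < C) (hα : α < 0) (hz : 0 < z) :
    0 < deriv (deriv (dualCandidate C α k c)) z := by
  have hderiv : deriv (dualCandidate C α k c) =ᶠ[nhds z] fun x => C * α * x ^ (α - 1) + k := by
    filter_upwards [eventually_ne_nhds hz.ne'] with x hx using deriv_eq hx
  have hsecond : HasDerivAt (fun x => C * α * x ^ (α - 1) + k)
      (C * α * ((α - 1) * z ^ (α - 1 - 1))) z :=
    ((hasDerivAt_rpow_const (Or.inl hz.ne')).const_mul (C * α)).add_const k
  rw [hderiv.deriv_eq, hsecond.deriv]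
  have hCα : C * α < 0 := mul_neg_of_pos_of_neg hC hα
  have hα1 : α - 1 < 0 := by linarith
  exact mul_pos_of_neg_of_neg hCα (mul_neg_of_neg_of_pos hα1 (rpow_pos_of_pos hz _))

theorem deriv_le_deriv (hC : 0 < C) (hα : α < 0) (hb : 0 < b) (hbz : b ≤ z) :
    deriv (dualCandidate C α k c) b ≤ deriv (dualCandidate C α k c) z := by
  rw [deriv_eq hb.ne', deriv_eq (hb.trans_le hbz).ne']
  have hpow : z ^ (α - 1) ≤ b ^ (α - 1) := rpow_le_rpow_of_nonpos hb hbz (by linarith)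
  nlinarith [mul_neg_of_pos_of_neg hC hα]

theorem monotoneOn_Ici (hC : 0 < C) (hα : α < 0) (hb : 0 < b)
    (hfit : deriv (dualCandidate C α k c) b = 0) :
    MonotoneOn (dualCandidate C α k c) (Ici b) := by
  have hdiff : ∀ x ∈ Ici b, DifferentiableAt ℝ (dualCandidate C α k c) x :=
    fun x hx => (hasDerivAt (hb.trans_le hx).ne').differentiableAt
  refine monotoneOn_of_deriv_nonneg (convex_Ici b)
    (fun x hx => (hdiff x hx).continuousAt.continuousWithinAt)
    (fun x hx => (hdiff x (interior_subset hx)).differentiableWithinAt) fun x hx => ?_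
  rw [interior_Ici] at hx
  exact hfit ▸ deriv_le_deriv hC hα hb hx.le

theorem deriv_eq_zero (hb : 0 < b) (hα : α ≠ 0) (hC : C = -(k / α) * b ^ (1 - α)) :
    deriv (dualCandidate C α k c) b = 0 := by
  have hpow : b ^ (1 - α) * b ^ (α - 1) = 1 := by rw [← rpow_add hb]; simp
  rw [deriv_eq hb.ne', hC]
  field_simp
  linear_combination -k * hpow

theorem eq_zero (hb : 0 < b) (hα : α ≠ 0) (hC : C = -(k / α) * b ^ (1 - α)) (hk : k ≠ 0)
    (hα1 : α ≠ 1) (hbc : b = c * α / (k * (α - 1))) :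
    dualCandidate C α k c b = 0 := by
  have hpow : b ^ (1 - α) * b ^ α = b := by rw [← rpow_add hb]; simp
  have hα1' : α - 1 ≠ 0 := sub_ne_zero.mpr hα1
  have hCb : C * b ^ α = -(k / α) * b := by rw [hC, mul_assoc, hpow]
  rw [dualCandidate, hCb, hbc]
  field_simp
  ring

end dualCandidate

end

/-- Step 1 of the verification (inequality (A.6)): the candidate dual value function
`ŵ(z) = C₁ z^{α₁} + hz/r − G₀/(ρ+m)` vanishes to first order at the free boundary `b`,
is strictly convex on `(0,∞)`, and is nonnegative on `[b,∞)`. -/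
theorem stmt_12 (h r ρ m α₁ G₀ b C₁ : ℝ) (hh : 0 < h) (hr : 0 < r) (hρm : 0 < ρ + m)
    (hα : α₁ < 0) (hG : 0 < G₀)
    (hb : b = G₀ * r * α₁ / ((ρ + m) * h * (α₁ - 1)))
    (hC : C₁ = -(h/(r*α₁)) * b ^ (1 - α₁))
    (w : ℝ → ℝ) (hw : ∀ z : ℝ, w z = C₁ * z ^ α₁ + h * z / r - G₀ / (ρ + m)) :
    w b = 0 ∧ deriv w b = 0 ∧ (∀ z : ℝ, 0 < z → 0 < deriv (deriv w) z) ∧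
    ∀ z : ℝ, b ≤ z → 0 ≤ w z := by
  obtain rfl : w = dualCandidate C₁ α₁ (h / r) (G₀ / (ρ + m)) := funext fun z => by
    rw [hw, dualCandidate, mul_div_right_comm]
  have hb0 : 0 < b := hb ▸ div_pos_of_neg_of_neg
    (mul_neg_of_pos_of_neg (by positivity) hα) (mul_neg_of_pos_of_neg (by positivity) (by linarith))
  have hC' : C₁ = -(h / r / α₁) * b ^ (1 - α₁) := by rw [hC, div_div]
  have hC0 : 0 < C₁ := hC' ▸ mul_pos (neg_pos.mpr (div_neg_of_pos_of_neg (by positivity) hα))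
    (rpow_pos_of_pos hb0 _)
  have hbc : b = G₀ / (ρ + m) * α₁ / (h / r * (α₁ - 1)) := by rw [hb]; field_simp
  have hfit := dualCandidate.deriv_eq_zero (c := G₀ / (ρ + m)) hb0 hα.ne hC'
  have hzero := dualCandidate.eq_zero hb0 hα.ne hC' (by positivity) (by linarith) hbc
  refine ⟨hzero, hfit, fun z hz => dualCandidate.deriv_deriv_pos hC0 hα hz, fun z hz => ?_⟩
  exact hzero ▸ dualCandidate.monotoneOn_Ici hC0 hα hb0 hfit self_mem_Ici hz hz
end

section
/- Let γ ∈ (0,1), h > 0, r > 0, m > 0, ρ > 0 with ρ + m > r, α₁ < 0, G₀ := m·(lB)^{1-γ}/(1-γ) > 0 (l, B > 0), b := G₀·r·α₁/((ρ+m)·h·(α₁−1)), and C₁ := −(h/(r·α₁))·b^{1−α₁}. Define ŵ(z) := C₁·z^{α₁} + h·z/r − G₀/(ρ+m) for z > b and ŵ(z) := 0 for 0 < z ≤ b. Then 0 ≤ ŵ(z) ≤ z·h/r for all z > 0. -/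
/-!
Write `κ := -h/(r α₁) > 0`. The constants are chosen so that `ŵ` fits smoothly at the free
boundary `b`, and then for `z > b`
`ŵ(z) = κ (b^{1-α₁} z^{α₁} - ((1-α₁) b + α₁ z))` and `zh/r = κ (-α₁ z)`.
The lower bound is Bernoulli's inequality, i.e. convexity of `z ↦ z^{α₁}` above its tangent
at `b`; the upper bound reduces to `b^{1-α₁} z^{α₁} ≤ b ≤ (1-α₁) b`, as `z^{α₁}` decreases.
-/

open Real

theorem one_sub_mul_add_mul_le_rpow_one_sub_mul_rpow {α b z : ℝ} (hα : α ≤ 0) (hb : 0 ≤ b)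
    (hz : 0 < z) : (1 - α) * b + α * z ≤ b ^ (1 - α) * z ^ α := by
  have bernoulli := one_add_mul_self_le_rpow_one_add
    (show -1 ≤ b / z - 1 by linarith [div_nonneg hb hz.le]) (show 1 ≤ 1 - α by linarith)
  rw [add_sub_cancel, div_rpow hb hz.le] at bernoulli
  calc (1 - α) * b + α * z = (1 + (1 - α) * (b / z - 1)) * z := by field_simp; ring
    _ ≤ b ^ (1 - α) / z ^ (1 - α) * z := mul_le_mul_of_nonneg_right bernoulli hz.le
    _ = b ^ (1 - α) * z ^ α := by
      rw [rpow_sub hz, rpow_one]; field_simp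

theorem rpow_one_sub_mul_rpow_le_of_le {α b z : ℝ} (hα : α ≤ 0) (hb : 0 < b) (hbz : b ≤ z) :
    b ^ (1 - α) * z ^ α ≤ b :=
  calc b ^ (1 - α) * z ^ α ≤ b ^ (1 - α) * b ^ α :=
        mul_le_mul_of_nonneg_left (rpow_le_rpow_of_nonpos hb hbz hα) (rpow_nonneg hb.le _)
    _ = b := by rw [← rpow_add hb, sub_add_cancel, rpow_one]

theorem stmt_13_general (γ h r m ρ α₁ l B G₀ b C₁ : ℝ) (hγ1 : γ < 1)
    (hh : 0 < h) (hr : 0 < r) (hm : 0 < m) (hρ : 0 < ρ)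
    (hα : α₁ < 0) (hl : 0 < l) (hB : 0 < B)
    (hG : G₀ = m * (l*B)^(1-γ)/(1-γ))
    (hb : b = G₀ * r * α₁ / ((ρ + m) * h * (α₁ - 1)))
    (hC : C₁ = -(h/(r*α₁)) * b ^ (1 - α₁))
    (w : ℝ → ℝ)
    (hw1 : ∀ z : ℝ, b < z → w z = C₁ * z ^ α₁ + h * z / r - G₀ / (ρ + m))
    (hw2 : ∀ z : ℝ, 0 < z → z ≤ b → w z = 0) :
    ∀ z : ℝ, 0 < z → 0 ≤ w z ∧ w z ≤ z * h / r := by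
  have hρm : 0 < ρ + m := by positivity
  have hG0 : 0 < G₀ := by
    rw [hG]; exact div_pos (mul_pos hm (rpow_pos_of_pos (mul_pos hl hB) _)) (by linarith)
  have hb0 : 0 < b := by
    rw [hb]
    exact div_pos_of_neg_of_neg (mul_neg_of_pos_of_neg (by positivity) hα)
      (mul_neg_of_pos_of_neg (by positivity) (by linarith))
  set κ := -(h / (r * α₁)) with hκ
  have hκ0 : 0 < κ := neg_pos.mpr (div_neg_of_pos_of_neg hh (mul_neg_of_pos_of_neg hr hα))
  have hslope : h / r = κ * -α₁ := by rw [hκ]; field_simp [hα.ne]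
  have hlevel : G₀ / (ρ + m) = κ * ((1 - α₁) * b) := by
    rw [hκ, hb]; field_simp [hα.ne, show α₁ - 1 ≠ 0 by linarith]; ring
  intro z hz
  rcases le_or_gt z b with hzb | hbz
  · rw [hw2 z hz hzb]
    exact ⟨le_rfl, by positivity⟩
  · have hw : w z = κ * (b ^ (1 - α₁) * z ^ α₁ - ((1 - α₁) * b + α₁ * z)) := by
      rw [hw1 z hbz, hC, hlevel, mul_div_right_comm, hslope]; ring
    have hbound : z * h / r = κ * (-α₁ * z) := by
      rw [mul_div_assoc, hslope]; ring
    have lower := one_sub_mul_add_mul_le_rpow_one_sub_mul_rpow hα.le hb0.le hz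
    have upper := rpow_one_sub_mul_rpow_le_of_le hα.le hb0 hbz.le
    rw [hw, hbound]
    constructor
    · exact mul_nonneg hκ0.le (sub_nonneg.mpr lower)
    · exact mul_le_mul_of_nonneg_left (by linarith [mul_neg_of_neg_of_pos hα hb0]) hκ0.le

/-- Proposition 3.3 for the explicit dual value function: the piecewise function
`ŵ` (equal to `C₁ z^{α₁} + hz/r − G₀/(ρ+m)` above the boundary `b` and `0` below)
satisfies `0 ≤ ŵ(z) ≤ zh/r` for all `z > 0`. -/
theorem stmt_13 (γ h r m ρ α₁ l B G₀ b C₁ : ℝ) (hγ0 : 0 < γ) (hγ1 : γ < 1)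
    (hh : 0 < h) (hr : 0 < r) (hm : 0 < m) (hρ : 0 < ρ) (hρmr : r < ρ + m)
    (hα : α₁ < 0) (hl : 0 < l) (hB : 0 < B)
    (hG : G₀ = m * (l*B)^(1-γ)/(1-γ))
    (hb : b = G₀ * r * α₁ / ((ρ + m) * h * (α₁ - 1)))
    (hC : C₁ = -(h/(r*α₁)) * b ^ (1 - α₁))
    (w : ℝ → ℝ)
    (hw1 : ∀ z : ℝ, b < z → w z = C₁ * z ^ α₁ + h * z / r - G₀ / (ρ + m))
    (hw2 : ∀ z : ℝ, 0 < z → z ≤ b → w z = 0) :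
    ∀ z : ℝ, 0 < z → 0 ≤ w z ∧ w z ≤ z * h / r :=
  stmt_13_general γ h r m ρ α₁ l B G₀ b C₁ hγ1 hh hr hm hρ hα hl hB hG hb hC w hw1 hw2
end

section
/- Let γ ∈ (0,1), K > 0, κ > 0, h > 0, r > 0, ρ + m > 0, α₁ < 0, G₀ > 0, b := G₀·r·α₁/((ρ+m)·h·(α₁−1)), C₁ := −(h/(r·α₁))·b^{1−α₁}, and y > 0. Define v(z,y) := C₁·z^{α₁} + (γ/((1-γ)K))·z^{(γ-1)/γ} + z·y/κ for z > b, and v(z,y) := (γ/((1-γ)K))·z^{(γ-1)/γ} + z·y/κ − h·z/r + G₀/(ρ+m) for 0 < z ≤ b. Then: (i) z ↦ v(z,y) is differentiable on (0,∞), with derivative v_z(z,y) = C₁α₁z^{α₁−1} − z^{-1/γ}/K + y/κ for z > b and v_z(z,y) = −z^{-1/γ}/K + y/κ − h/r for 0 < z ≤ b; (ii) z ↦ v(z,y) is strictly convex on (0,∞); (iii) −v_z(z,y) → +∞ as z → 0⁺; and (iv) −v_z(z,y) → −y/κ as z → +∞. -/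
open Real Filter Set Topology

/-! The formulas for `b` and `C₁` are exactly the smooth-fit conditions: the two branches of `v`
agree at `b` together with their first derivatives, so `v` is differentiable on `(0, ∞)`.
Each branch derivative is strictly increasing on `(0, ∞)`, being a combination with negative
coefficients of the decreasing powers `z ^ (-(1/γ))` and `z ^ (α₁ - 1)` (note `C₁ α₁ < 0`, read
off from the derivative condition), and the two agree at `b`, so `v'` is strictly increasing and
`v` is strictly convex. The limits of `-v'` come from `z ^ (-(1/γ)) → ∞` as `z → 0⁺` and
`z ^ (-(1/γ)), z ^ (α₁ - 1) → 0` as `z → ∞`. -/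

theorem hasDerivAt_ite_lt {g₁ g₂ : ℝ → ℝ} {g₁' g₂' b z : ℝ} (h₁ : HasDerivAt g₁ g₁' z)
    (h₂ : HasDerivAt g₂ g₂' z)
    (hfit : z = b → g₁ b = g₂ b ∧ g₁' = g₂') :
    HasDerivAt (fun x => if b < x then g₁ x else g₂ x) (if b < z then g₁' else g₂') z := by
  rcases lt_trichotomy z b with hzb | rfl | hbz
  · rw [if_neg hzb.not_gt]
    exact h₂.congr_of_eventuallyEq <|
      (eventually_lt_nhds hzb).mono fun x hx => if_neg hx.not_gt
  · obtain ⟨hval, rfl⟩ := hfit rfl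
    rw [if_neg (lt_irrefl z), ← hasDerivWithinAt_univ, ← Iic_union_Ici]
    refine HasDerivWithinAt.union ?_ ?_
    · exact h₂.hasDerivWithinAt.congr (fun x hx => if_neg (not_lt.mpr hx))
        (if_neg (lt_irrefl z))
    · refine h₁.hasDerivWithinAt.congr (fun x hx => ?_) (by rw [if_neg (lt_irrefl z), hval])
      split_ifs with hzx
      · rfl
      · rw [le_antisymm (not_lt.mp hzx) hx, hval]
  · rw [if_pos hbz]
    exact h₁.congr_of_eventuallyEq <| (eventually_gt_nhds hbz).mono fun x hx => if_pos hx

theorem StrictMonoOn.ite_lt {α β : Type*} [LinearOrder α] [Preorder β] {f₁ f₂ : α → β}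
    {s : Set α} {b : α} (h₁ : StrictMonoOn f₁ s) (h₂ : StrictMonoOn f₂ s) (hb : b ∈ s)
    (hfit : f₁ b = f₂ b) :
    StrictMonoOn (fun x => if b < x then f₁ x else f₂ x) s := by
  intro x hx z hz hxz
  dsimp only
  split_ifs with hbx hbz hbz
  · exact h₁ hx hz hxz
  · exact absurd (hbx.trans hxz) hbz
  · calc f₂ x ≤ f₂ b := h₂.monotoneOn hx hb (not_lt.mp hbx)
      _ = f₁ b := hfit.symm
      _ < f₁ z := h₁ hb hz hbz
  · exact h₂ hx hz hxz

theorem hasDerivAt_crra_conjugate {γ K z : ℝ} (hγ0 : γ ≠ 0) (hγ1 : γ ≠ 1) (hz : 0 < z) :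
    HasDerivAt (fun x => γ / ((1 - γ) * K) * x ^ ((γ - 1) / γ)) (-z ^ (-(1 / γ)) / K) z := by
  refine ((hasDerivAt_rpow_const (Or.inl hz.ne')).const_mul (γ / ((1 - γ) * K))).congr_deriv ?_
  have h1γ : 1 - γ ≠ 0 := sub_ne_zero.mpr hγ1.symm
  rw [show (γ - 1) / γ - 1 = -(1 / γ) by field_simp; ring]
  field_simp
  ring

section SmoothFit

variable {h r ρ m α₁ G₀ b C₁ : ℝ}

theorem smoothFit_boundary_pos (hb : b = G₀ * r * α₁ / ((ρ + m) * h * (α₁ - 1)))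
    (hG : 0 < G₀) (hr : 0 < r) (hρm : 0 < ρ + m) (hh : 0 < h) (hα : α₁ < 0) : 0 < b := by
  rw [hb]
  exact div_pos_of_neg_of_neg (mul_neg_of_pos_of_neg (mul_pos hG hr) hα)
    (mul_neg_of_pos_of_neg (mul_pos hρm hh) (by linarith))

theorem smoothFit_deriv (hC : C₁ = -(h / (r * α₁)) * b ^ (1 - α₁)) (hb0 : 0 < b)
    (hα : α₁ ≠ 0) : C₁ * α₁ * b ^ (α₁ - 1) = -(h / r) := by
  have hpow : b ^ (1 - α₁) * b ^ (α₁ - 1) = 1 := by rw [← rpow_add hb0]; simp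
  rw [hC]
  field_simp
  rw [mul_assoc h, hpow, mul_one]

theorem smoothFit_value (hb : b = G₀ * r * α₁ / ((ρ + m) * h * (α₁ - 1)))
    (hC : C₁ = -(h / (r * α₁)) * b ^ (1 - α₁)) (hb0 : 0 < b) (hα : α₁ ≠ 0) (hα1 : α₁ ≠ 1)
    (hh : h ≠ 0) (hr : r ≠ 0) (hρm : ρ + m ≠ 0) :
    C₁ * b ^ α₁ = G₀ / (ρ + m) - h * b / r := by
  have hpow : b ^ (1 - α₁) * b ^ α₁ = b := by rw [← rpow_add hb0]; simp
  have hden : (ρ + m) * h * (α₁ - 1) ≠ 0 := by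
    have := sub_ne_zero.mpr hα1
    positivity
  have hbeq : b * ((ρ + m) * h * (α₁ - 1)) = G₀ * r * α₁ := by
    rw [hb, div_mul_cancel₀ _ hden]
  rw [hC]
  field_simp
  linear_combination -(h * (ρ + m)) * hpow + hbeq

end SmoothFit

section DualValue

variable {γ K κ h r ρ m α₁ G₀ y C₁ z : ℝ}

theorem hasDerivAt_dualValue_above (hγ0 : γ ≠ 0) (hγ1 : γ ≠ 1) (hz : 0 < z) :
    HasDerivAt (fun x => C₁ * x ^ α₁ + γ / ((1 - γ) * K) * x ^ ((γ - 1) / γ) + x * y / κ)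
      (C₁ * α₁ * z ^ (α₁ - 1) - z ^ (-(1 / γ)) / K + y / κ) z :=
  ((((hasDerivAt_rpow_const (Or.inl hz.ne')).const_mul C₁).add
    (hasDerivAt_crra_conjugate hγ0 hγ1 hz)).add
    (((hasDerivAt_id' z).mul_const y).div_const κ)).congr_deriv (by ring)

theorem hasDerivAt_dualValue_below (hγ0 : γ ≠ 0) (hγ1 : γ ≠ 1) (hz : 0 < z) :
    HasDerivAt
      (fun x => γ / ((1 - γ) * K) * x ^ ((γ - 1) / γ) + x * y / κ - h * x / r + G₀ / (ρ + m))
      (-z ^ (-(1 / γ)) / K + y / κ - h / r) z :=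
  ((((hasDerivAt_crra_conjugate hγ0 hγ1 hz).add
    (((hasDerivAt_id' z).mul_const y).div_const κ)).sub
    (((hasDerivAt_id' z).const_mul h).div_const r)).add_const _).congr_deriv (by ring)

theorem strictMonoOn_dualMarginal_below (hγ : 0 < γ) (hK : 0 < K) :
    StrictMonoOn (fun z : ℝ => -z ^ (-(1 / γ)) / K + y / κ - h / r) (Ioi 0) := by
  intro x hx z _ hxz
  have := div_lt_div_of_pos_right
    (rpow_lt_rpow_of_neg hx hxz (neg_lt_zero.mpr (one_div_pos.mpr hγ))) hK
  simp only [neg_div]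
  linarith

theorem strictMonoOn_dualMarginal_above (hγ : 0 < γ) (hK : 0 < K) (hCα : C₁ * α₁ < 0)
    (hα : α₁ < 1) :
    StrictMonoOn (fun z : ℝ => C₁ * α₁ * z ^ (α₁ - 1) - z ^ (-(1 / γ)) / K + y / κ) (Ioi 0) := by
  intro x hx z _ hxz
  have h₁ := mul_lt_mul_of_neg_left (rpow_lt_rpow_of_neg hx hxz (sub_neg.mpr hα)) hCα
  have h₂ := div_lt_div_of_pos_right
    (rpow_lt_rpow_of_neg hx hxz (neg_lt_zero.mpr (one_div_pos.mpr hγ))) hK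
  dsimp only
  linarith

theorem tendsto_neg_dualMarginal_below_nhdsGT_zero (hγ : 0 < γ) (hK : 0 < K) :
    Tendsto (fun z : ℝ => -(-z ^ (-(1 / γ)) / K + y / κ - h / r)) (𝓝[>] 0) atTop :=
  (tendsto_atTop_add_const_right _ (h / r - y / κ)
    ((tendsto_rpow_neg_nhdsGT_zero (neg_lt_zero.mpr (one_div_pos.mpr hγ))).atTop_div_const
      hK)).congr fun z => by ring

theorem tendsto_dualMarginal_above_atTop (hγ : 0 < γ) (hα : α₁ < 1) :
    Tendsto (fun z : ℝ => C₁ * α₁ * z ^ (α₁ - 1) - z ^ (-(1 / γ)) / K + y / κ) atTop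
      (𝓝 (y / κ)) := by
  have h₁ : Tendsto (fun z : ℝ => z ^ (α₁ - 1)) atTop (𝓝 0) := by
    simpa using tendsto_rpow_neg_atTop (sub_pos.mpr hα)
  have h₂ := tendsto_rpow_neg_atTop (one_div_pos.mpr hγ)
  simpa using ((h₁.const_mul (C₁ * α₁)).sub (h₂.div_const K)).add_const (y / κ)

end DualValue

theorem stmt_14_general (γ K κ h r ρ m α₁ G₀ y b C₁ : ℝ) (hγ0 : 0 < γ) (hγ1 : γ < 1)
    (hK : 0 < K) (hh : 0 < h) (hr : 0 < r) (hρm : 0 < ρ + m)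
    (hα : α₁ < 0) (hG : 0 < G₀)
    (hb : b = G₀ * r * α₁ / ((ρ + m) * h * (α₁ - 1)))
    (hC : C₁ = -(h/(r*α₁)) * b ^ (1 - α₁))
    (v : ℝ → ℝ)
    (hv : ∀ z : ℝ, 0 < z → v z = if b < z
        then C₁ * z ^ α₁ + (γ/((1-γ)*K)) * z ^ ((γ-1)/γ) + z * y / κ
        else (γ/((1-γ)*K)) * z ^ ((γ-1)/γ) + z * y / κ - h * z / r + G₀/(ρ+m)) :
    (∀ z : ℝ, 0 < z → HasDerivAt v
      (if b < z then C₁ * α₁ * z ^ (α₁-1) - z ^ (-(1/γ)) / K + y / κ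
        else -z ^ (-(1/γ)) / K + y / κ - h / r) z) ∧
    StrictConvexOn ℝ (Set.Ioi 0) v ∧
    Tendsto (fun z => -deriv v z) (nhdsWithin 0 (Set.Ioi 0)) atTop ∧
    Tendsto (fun z => -deriv v z) atTop (nhds (-(y/κ))) := by
  have hb0 : 0 < b := smoothFit_boundary_pos hb hG hr hρm hh hα
  have hfit_value := smoothFit_value hb hC hb0 hα.ne (hα.trans one_pos).ne hh.ne' hr.ne' hρm.ne'
  have hfit_deriv := smoothFit_deriv hC hb0 hα.ne
  have hderiv : ∀ z : ℝ, 0 < z → HasDerivAt v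
      (if b < z then C₁ * α₁ * z ^ (α₁-1) - z ^ (-(1/γ)) / K + y / κ
        else -z ^ (-(1/γ)) / K + y / κ - h / r) z := fun z hz =>
    (hasDerivAt_ite_lt (hasDerivAt_dualValue_above hγ0.ne' hγ1.ne hz)
      (hasDerivAt_dualValue_below hγ0.ne' hγ1.ne hz) fun hzb => by
        subst hzb
        exact ⟨by linear_combination hfit_value, by linear_combination hfit_deriv⟩)
      |>.congr_of_eventuallyEq ((eventually_gt_nhds hz).mono hv)
  have hCα : C₁ * α₁ < 0 :=
    neg_of_mul_neg_left (hfit_deriv ▸ neg_lt_zero.mpr (div_pos hh hr)) (rpow_nonneg hb0.le _)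
  refine ⟨hderiv, ?_, ?_, ?_⟩
  · refine StrictMonoOn.strictConvexOn_of_deriv (convex_Ioi 0)
      (fun z hz => (hderiv z hz).continuousAt.continuousWithinAt) ?_
    rw [interior_Ioi]
    exact (StrictMonoOn.ite_lt (strictMonoOn_dualMarginal_above hγ0 hK hCα (hα.trans one_pos))
      (strictMonoOn_dualMarginal_below hγ0 hK) hb0 (by linear_combination hfit_deriv)).congr
      fun z hz => (hderiv z hz).deriv.symm
  · refine (tendsto_neg_dualMarginal_below_nhdsGT_zero (y := y) (κ := κ) (h := h) (r := r)
      hγ0 hK).congr' ?_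
    filter_upwards [Ioo_mem_nhdsGT hb0] with z hz
    rw [(hderiv z hz.1).deriv, if_neg hz.2.not_gt]
  · refine (tendsto_dualMarginal_above_atTop (C₁ := C₁) (K := K) hγ0
      (hα.trans one_pos)).neg.congr' ?_
    filter_upwards [eventually_gt_atTop b] with z hz
    rw [(hderiv z (hb0.trans hz)).deriv, if_pos hz]

/-- Proposition 3.8 with formulas (A.10)–(A.11): for fixed `y > 0`, the dual value
function `z ↦ v(z,y)` is differentiable on `(0,∞)` with the stated derivative, is
strictly convex, and `−v_z(z,y) → +∞` as `z → 0⁺` while `−v_z(z,y) → −y/κ`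
as `z → +∞`. -/
theorem stmt_14 (γ K κ h r ρ m α₁ G₀ y b C₁ : ℝ) (hγ0 : 0 < γ) (hγ1 : γ < 1)
    (hK : 0 < K) (hκ : 0 < κ) (hh : 0 < h) (hr : 0 < r) (hρm : 0 < ρ + m)
    (hα : α₁ < 0) (hG : 0 < G₀) (hy : 0 < y)
    (hb : b = G₀ * r * α₁ / ((ρ + m) * h * (α₁ - 1)))
    (hC : C₁ = -(h/(r*α₁)) * b ^ (1 - α₁))
    (v : ℝ → ℝ)
    (hv : ∀ z : ℝ, 0 < z → v z = if b < z
        then C₁ * z ^ α₁ + (γ/((1-γ)*K)) * z ^ ((γ-1)/γ) + z * y / κ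
        else (γ/((1-γ)*K)) * z ^ ((γ-1)/γ) + z * y / κ - h * z / r + G₀/(ρ+m)) :
    (∀ z : ℝ, 0 < z → HasDerivAt v
      (if b < z then C₁ * α₁ * z ^ (α₁-1) - z ^ (-(1/γ)) / K + y / κ
        else -z ^ (-(1/γ)) / K + y / κ - h / r) z) ∧
    StrictConvexOn ℝ (Set.Ioi 0) v ∧
    Tendsto (fun z => -deriv v z) (nhdsWithin 0 (Set.Ioi 0)) atTop ∧
    Tendsto (fun z => -deriv v z) atTop (nhds (-(y/κ))) :=
  stmt_14_general γ K κ h r ρ m α₁ G₀ y b C₁ hγ0 hγ1 hK hh hr hρm hα hG hb hC v hv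
end

section
/- Let γ ∈ (0,1), m, ρ, r, l > 0, K > 0, κ > 0, and let y > 0 and x > −y/κ. Set D := 1/K + m·(l·r)^{(1-γ)/γ}·(ρ+m)^{-1/γ} and z* := ((y/κ + x)/D)^{-γ}. Then: (i) z* is the unique z > 0 satisfying D·z^{-1/γ} = y/κ + x (equivalently, ∂/∂z[Q̂^B(z,y) + ū(z)] = −x); (ii) the optimal consumption satisfies (z*)^{-1/γ} = (y/κ + x)/D; (iii) the optimal bequest satisfies (z*·(ρ+m)/r)^{-1/γ}·l^{(1-γ)/γ} = ((y/κ + x)/D)·((ρ+m)/r)^{-1/γ}·l^{(1-γ)/γ}; and (iv) Q̂^B(z*, y) + z*·x + ū(z*) = D^{γ}·(y/κ + x)^{1-γ}/(1-γ), where Q̂^B(z,y) = (γ/((1-γ)K))·z^{(γ-1)/γ} + z·y/κ and ū(z) = m·l^{(1-γ)/γ}·(γ/(1-γ))·r^{(1-γ)/γ}·(ρ+m)^{-1/γ}·z^{(γ-1)/γ}. -/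
/-! With `A := y/κ + x` the whole dual function is `z ↦ (γ/(1-γ)) D z^{(γ-1)/γ} + z A`,
since `D` collects the coefficients of `z^{(γ-1)/γ}` in `Q̂^B` and `ū`. Its stationarity
condition `D z^{-1/γ} = A` is inverted by `z = (A/D)^{-γ}`, and at that point both terms are
multiples of `D (A/D)^{1-γ} = D^γ A^{1-γ}`. -/

open Real

variable {γ a z A D : ℝ}

lemma rpow_neg_rpow_neg_one_div (ha : 0 ≤ a) (hγ : γ ≠ 0) : (a ^ (-γ)) ^ (-(1/γ)) = a := by
  rw [← rpow_mul ha, show -γ * -(1/γ) = 1 by field_simp, rpow_one]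

lemma rpow_neg_one_div_eq_iff (hz : 0 ≤ z) (ha : 0 ≤ a) (hγ : γ ≠ 0) :
    z ^ (-(1/γ)) = a ↔ z = a ^ (-γ) := by
  constructor
  · rintro rfl
    rw [← rpow_mul hz, show -(1/γ) * -γ = 1 by field_simp, rpow_one]
  · rintro rfl
    exact rpow_neg_rpow_neg_one_div ha hγ

lemma rpow_neg_rpow_sub_one_div (ha : 0 ≤ a) (hγ : γ ≠ 0) :
    (a ^ (-γ)) ^ ((γ-1)/γ) = a ^ (1-γ) := by
  rw [← rpow_mul ha]
  congr 1
  field_simp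
  ring

lemma power_dual_value_at_stationary (hγ0 : γ ≠ 0) (hγ1 : γ ≠ 1) (hA : 0 < A) (hD : 0 < D) :
    γ/(1-γ) * D * ((A/D) ^ (-γ)) ^ ((γ-1)/γ) + (A/D) ^ (-γ) * A
      = D ^ γ * A ^ (1-γ) / (1-γ) := by
  have hAD : 0 < A/D := div_pos hA hD
  have linear_term : (A/D) ^ (-γ) * A = D * (A/D) ^ (1-γ) := by
    rw [sub_eq_add_neg, add_comm, rpow_add hAD, rpow_one]
    field_simp
  have closed_form : D ^ γ * A ^ (1-γ) = D * (A/D) ^ (1-γ) := by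
    rw [div_rpow hA.le hD.le, rpow_sub hD, rpow_one]
    field_simp
  rw [rpow_neg_rpow_sub_one_div hAD.le hγ0, linear_term, closed_form]
  field_simp
  ring

theorem stmt_15_general (γ m ρ r l K κ y x D zs : ℝ) (hγ0 : 0 < γ) (hγ1 : γ < 1)
    (hm : 0 < m) (hρ : 0 < ρ) (hr : 0 < r) (hl : 0 < l)
    (hK : 0 < K) (hx : -(y/κ) < x)
    (hD : D = 1/K + m * (l*r) ^ ((1-γ)/γ) * (ρ+m) ^ (-(1/γ)))
    (hzs : zs = ((y/κ + x)/D) ^ (-γ)) :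
    (0 < zs ∧ ∀ z : ℝ, 0 < z → (D * z ^ (-(1/γ)) = y/κ + x ↔ z = zs)) ∧
    zs ^ (-(1/γ)) = (y/κ + x)/D ∧
    (zs * (ρ+m)/r) ^ (-(1/γ)) * l ^ ((1-γ)/γ)
      = ((y/κ + x)/D) * ((ρ+m)/r) ^ (-(1/γ)) * l ^ ((1-γ)/γ) ∧
    (γ/((1-γ)*K)) * zs ^ ((γ-1)/γ) + zs * y / κ + zs * x
      + m * l ^ ((1-γ)/γ) * (γ/(1-γ)) * r ^ ((1-γ)/γ) * (ρ+m) ^ (-(1/γ)) * zs ^ ((γ-1)/γ)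
      = D ^ γ * (y/κ + x) ^ (1-γ) / (1-γ) := by
  have hA : 0 < y/κ + x := by linarith
  have hD0 : 0 < D := by rw [hD]; positivity
  have hAD : 0 < (y/κ + x)/D := div_pos hA hD0
  have hzs0 : 0 < zs := hzs ▸ rpow_pos_of_pos hAD _
  have consumption : zs ^ (-(1/γ)) = (y/κ + x)/D :=
    hzs ▸ rpow_neg_rpow_neg_one_div hAD.le hγ0.ne'
  refine ⟨⟨hzs0, fun z hz => ?_⟩, consumption, ?_, ?_⟩
  · rw [mul_comm, ← eq_div_iff hD0.ne', rpow_neg_one_div_eq_iff hz.le hAD.le hγ0.ne', hzs]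
  · rw [mul_div_assoc, mul_rpow hzs0.le (by positivity), consumption]
  · have value := power_dual_value_at_stationary hγ0.ne' hγ1.ne hA hD0
    rw [← hzs] at value
    have hD_split : D = 1/K + m * l ^ ((1-γ)/γ) * r ^ ((1-γ)/γ) * (ρ+m) ^ (-(1/γ)) := by
      rw [hD, mul_rpow hl.le hr.le]
      ring
    have hcoef : γ/((1-γ)*K) = γ/(1-γ) * (1/K) := by rw [div_mul_div_comm, mul_one]
    linear_combination value - γ/(1-γ) * zs ^ ((γ-1)/γ) * hD_split + zs ^ ((γ-1)/γ) * hcoef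

/-- The closed-form content of Theorem 4.6 (controlled bequest): with
`D := 1/K + m(lr)^{(1-γ)/γ}(ρ+m)^{-1/γ}` and `z* := ((y/κ+x)/D)^{-γ}`,
`z*` is the unique positive stationary point, the optimal consumption and bequest
have the stated closed forms, and the dual value at `z*` equals
`D^γ (y/κ+x)^{1-γ}/(1-γ)`. -/
theorem stmt_15 (γ m ρ r l K κ y x D zs : ℝ) (hγ0 : 0 < γ) (hγ1 : γ < 1)
    (hm : 0 < m) (hρ : 0 < ρ) (hr : 0 < r) (hl : 0 < l)
    (hK : 0 < K) (hκ : 0 < κ) (hy : 0 < y) (hx : -(y/κ) < x)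
    (hD : D = 1/K + m * (l*r) ^ ((1-γ)/γ) * (ρ+m) ^ (-(1/γ)))
    (hzs : zs = ((y/κ + x)/D) ^ (-γ)) :
    (0 < zs ∧ ∀ z : ℝ, 0 < z → (D * z ^ (-(1/γ)) = y/κ + x ↔ z = zs)) ∧
    zs ^ (-(1/γ)) = (y/κ + x)/D ∧
    (zs * (ρ+m)/r) ^ (-(1/γ)) * l ^ ((1-γ)/γ)
      = ((y/κ + x)/D) * ((ρ+m)/r) ^ (-(1/γ)) * l ^ ((1-γ)/γ) ∧
    (γ/((1-γ)*K)) * zs ^ ((γ-1)/γ) + zs * y / κ + zs * x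
      + m * l ^ ((1-γ)/γ) * (γ/(1-γ)) * r ^ ((1-γ)/γ) * (ρ+m) ^ (-(1/γ)) * zs ^ ((γ-1)/γ)
      = D ^ γ * (y/κ + x) ^ (1-γ) / (1-γ) :=
  stmt_15_general γ m ρ r l K κ y x D zs hγ0 hγ1 hm hρ hr hl hK hx hD hzs
end

section
/- Let 0 < γ < 1 and q, l, m, r, ρ, z > 0. Set L̄ := q^{-γ}·l^{1-γ}·r/(ρ+m). Then the supremum over B ≥ 0 of F(B) := (m/(ρ+m))·(l(q+B))^{1-γ}/(1-γ) − z·m·B/r equals: m·l^{(1-γ)/γ}·(γ/(1-γ))·r^{(1-γ)/γ}·(ρ+m)^{-1/γ}·z^{(γ-1)/γ} + z·m·q/r if z < L̄, and (m/(ρ+m))·(lq)^{1-γ}/(1-γ) if z ≥ L̄. Moreover the supremum is attained at B₀* = (z(ρ+m)/r)^{-1/γ}·l^{(1-γ)/γ} − q when z < L̄, and at B₀* = 0 when z ≥ L̄. -/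
open Real Set

/-! In the total bequest `x = l (q + B)` the objective is, up to the factor `m/(ρ+m)` and an
additive constant, `x^(1-γ)/(1-γ) - y x` with `y = z(ρ+m)/(rl)`. By concavity of `x ↦ x^(1-γ)`
(Bernoulli's inequality) it lies below its tangent line at every `x₀ > 0`. The slope vanishes at
`x₀ = y^(-1/γ)`, the global maximiser on `[0, ∞)`; the condition `z < L̄` says exactly that this
`x₀` exceeds `lq`. Otherwise the slope at `x₀ = lq` is `≤ 0`, so `B = 0` is optimal. -/

lemma rpow_le_rpow_add_mul_sub {p x x₀ : ℝ} (hp0 : 0 ≤ p) (hp1 : p ≤ 1) (hx : 0 ≤ x)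
    (hx₀ : 0 < x₀) : x ^ p ≤ x₀ ^ p + p * x₀ ^ (p - 1) * (x - x₀) := by
  have bernoulli := rpow_one_add_le_one_add_mul_self (s := x / x₀ - 1)
    (by linarith [div_nonneg hx hx₀.le]) hp0 hp1
  rw [add_sub_cancel, div_rpow hx hx₀.le, div_le_iff₀ (by positivity)] at bernoulli
  rw [rpow_sub_one hx₀.ne']
  refine bernoulli.trans_eq ?_
  field_simp

lemma rpow_neg_mul_rpow_sub_one {W l : ℝ} (s : ℝ) (hW : 0 ≤ W) (hl : 0 < l) :
    W ^ (-s) * l ^ (s - 1) = (W / l) ^ (-s) / l := by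
  rw [div_rpow hW hl.le, rpow_neg hl.le, rpow_sub_one hl.ne']
  field_simp

lemma mul_div_mul_rpow_div {z b r l : ℝ} (e : ℝ) (hz : 0 ≤ z) (hb : 0 < b) (hr : 0 < r)
    (hl : 0 < l) : (z * b / (r * l)) ^ e / b = l ^ (-e) * r ^ (-e) * b ^ (e - 1) * z ^ e := by
  rw [div_rpow (by positivity) (by positivity), mul_rpow hz hb.le, mul_rpow hr.le hl.le,
    rpow_neg hl.le, rpow_neg hr.le, rpow_sub_one hb.ne']
  field_simp

lemma lt_rpow_neg_inv_of_lt_rpow_neg {γ a y : ℝ} (hγ : 0 < γ) (ha : 0 ≤ a) (hy : 0 < y)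
    (h : y < a ^ (-γ)) : a < y ^ (-(1 / γ)) := by
  have hinv : -(1 / γ) = (-γ)⁻¹ := by rw [one_div, neg_inv]
  have := rpow_lt_rpow_of_neg hy h (by simp [hγ] : -(1 / γ) < 0)
  rw [hinv, rpow_rpow_inv ha (by simp [hγ.ne'])] at this
  rwa [hinv]

noncomputable def powerDualObjective (γ y x : ℝ) : ℝ := x ^ (1 - γ) / (1 - γ) - y * x

section PowerDualObjective

variable {γ y x₀ : ℝ}

lemma powerDualObjective_le_tangent {x : ℝ} (hγ0 : 0 ≤ γ) (hγ1 : γ < 1) (hx : 0 ≤ x)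
    (hx₀ : 0 < x₀) :
    powerDualObjective γ y x ≤
      powerDualObjective γ y x₀ + (x₀ ^ (-γ) - y) * (x - x₀) := by
  have hp : 0 < 1 - γ := by linarith
  have tangent := rpow_le_rpow_add_mul_sub hp.le (by linarith) hx hx₀
  rw [sub_sub_cancel_left] at tangent
  have := div_le_div_of_nonneg_right tangent hp.le
  rw [add_div, mul_assoc, mul_div_cancel_left₀ _ hp.ne'] at this
  unfold powerDualObjective
  linarith

lemma isMaxOn_powerDualObjective_rpow_neg_inv (hγ0 : 0 < γ) (hγ1 : γ < 1) (hy : 0 < y) :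
    IsMaxOn (powerDualObjective γ y) (Ici 0) (y ^ (-(1 / γ))) := fun x hx ↦ by
  have hslope : (y ^ (-(1 / γ))) ^ (-γ) = y := by
    rw [← rpow_mul hy.le, show -(1 / γ) * -γ = 1 by field_simp, rpow_one]
  have := powerDualObjective_le_tangent (y := y) (x₀ := y ^ (-(1 / γ))) hγ0.le hγ1
    (mem_Ici.mp hx) (by positivity)
  rwa [hslope, sub_self, zero_mul, add_zero] at this

lemma isMaxOn_powerDualObjective_of_rpow_le (hγ0 : 0 ≤ γ) (hγ1 : γ < 1) (hx₀ : 0 < x₀)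
    (hy : x₀ ^ (-γ) ≤ y) : IsMaxOn (powerDualObjective γ y) (Ici x₀) x₀ := fun x hx ↦ by
  have hx : x₀ ≤ x := hx
  have hslope : (x₀ ^ (-γ) - y) * (x - x₀) ≤ 0 :=
    mul_nonpos_of_nonpos_of_nonneg (by linarith) (by linarith)
  exact (powerDualObjective_le_tangent hγ0 hγ1 (hx₀.le.trans hx) hx₀).trans (by linarith)

lemma powerDualObjective_rpow_neg_inv (hγ0 : 0 < γ) (hγ1 : γ < 1) (hy : 0 < y) :
    powerDualObjective γ y (y ^ (-(1 / γ))) = γ / (1 - γ) * y ^ ((γ - 1) / γ) := by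
  have hp : 1 - γ ≠ 0 := by linarith
  have he : 1 + -(1 / γ) = (γ - 1) / γ := by field_simp; ring
  rw [powerDualObjective, ← rpow_mul hy.le,
    ← rpow_one_add' hy.le (he ▸ div_ne_zero (by linarith) hγ0.ne'), he,
    show -(1 / γ) * (1 - γ) = (γ - 1) / γ by field_simp; ring]
  field_simp
  ring

end PowerDualObjective

/-- The dual bequest value with reserved inheritance `q` (Section 5.1.2):
`F(B) = (m/(ρ+m))(l(q+B))^{1-γ}/(1-γ) − zmB/r` on `[0,∞)` is maximized at
`B₀* = (z(ρ+m)/r)^{-1/γ} l^{(1-γ)/γ} − q` with the stated value when `z < L̄`,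
and at `B₀* = 0` with value `(m/(ρ+m))(lq)^{1-γ}/(1-γ)` when `z ≥ L̄`. -/
theorem stmt_16 (γ q l m r ρ z L : ℝ) (hγ0 : 0 < γ) (hγ1 : γ < 1)
    (hq : 0 < q) (hl : 0 < l) (hm : 0 < m) (hr : 0 < r) (hρ : 0 < ρ) (hz : 0 < z)
    (hL : L = q ^ (-γ) * l ^ (1-γ) * r / (ρ+m))
    (F : ℝ → ℝ)
    (hF : ∀ B : ℝ, F B = (m/(ρ+m)) * ((l*(q+B)) ^ (1-γ) / (1-γ)) - z*m*B/r) :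
    (z < L →
      (0:ℝ) ≤ (z*(ρ+m)/r) ^ (-(1/γ)) * l ^ ((1-γ)/γ) - q ∧
      IsMaxOn F (Set.Ici 0) ((z*(ρ+m)/r) ^ (-(1/γ)) * l ^ ((1-γ)/γ) - q) ∧
      F ((z*(ρ+m)/r) ^ (-(1/γ)) * l ^ ((1-γ)/γ) - q)
        = m * l ^ ((1-γ)/γ) * (γ/(1-γ)) * r ^ ((1-γ)/γ) * (ρ+m) ^ (-(1/γ)) * z ^ ((γ-1)/γ)
          + z*m*q/r) ∧
    (L ≤ z →
      IsMaxOn F (Set.Ici 0) 0 ∧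
      F 0 = (m/(ρ+m)) * ((l*q) ^ (1-γ) / (1-γ))) := by
  have hρm : 0 < ρ + m := by linarith
  set y := z * (ρ + m) / (r * l) with hy_def
  have hy : 0 < y := by positivity
  have hF' : F = (fun t ↦ m / (ρ + m) * t + z * m * q / r) ∘ powerDualObjective γ y ∘
      (fun B ↦ l * (q + B)) := funext fun B ↦ by
    simp only [Function.comp_apply, powerDualObjective, hF, hy_def]
    field_simp
    ring
  have hmono : Monotone fun t ↦ m / (ρ + m) * t + z * m * q / r :=
    (monotone_id.const_mul (by positivity)).add_const _
  have hthreshold : (l * q) ^ (-γ) = L * (ρ + m) / (r * l) := by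
    rw [hL, mul_rpow hl.le hq.le, show l ^ (1 - γ) = l ^ (-γ) * l by
      rw [← rpow_add_one hl.ne']; ring_nf]
    field_simp
  constructor
  · intro hzL
    have hqx : l * q < y ^ (-(1 / γ)) :=
      lt_rpow_neg_inv_of_lt_rpow_neg hγ0 (by positivity) hy (by rw [hthreshold, hy_def]; gcongr)
    have hB₀ : (z * (ρ + m) / r) ^ (-(1 / γ)) * l ^ ((1 - γ) / γ) - q =
        y ^ (-(1 / γ)) / l - q := by
      rw [show (1 - γ) / γ = 1 / γ - 1 by field_simp,
        rpow_neg_mul_rpow_sub_one _ (by positivity) hl, div_div]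
    have hlB₀ : l * (q + (y ^ (-(1 / γ)) / l - q)) = y ^ (-(1 / γ)) := by field_simp; ring
    rw [hB₀]
    refine ⟨by rw [sub_nonneg, le_div_iff₀ hl]; linarith, ?_, ?_⟩
    · rw [hF']
      exact ((isMaxOn_powerDualObjective_rpow_neg_inv hγ0 hγ1 hy).comp_mapsTo
        (fun B hB ↦ mem_Ici.mpr (mul_nonneg hl.le (by linarith [mem_Ici.mp hB]))) hlB₀).comp_mono
        hmono
    · have hcoeff := mul_div_mul_rpow_div ((γ - 1) / γ) hz.le hρm hr hl
      rw [show -((γ - 1) / γ) = (1 - γ) / γ by ring,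
        show (γ - 1) / γ - 1 = -(1 / γ) by field_simp; ring, ← hy_def] at hcoeff
      rw [hF', Function.comp_apply, Function.comp_apply, hlB₀,
        powerDualObjective_rpow_neg_inv hγ0 hγ1 hy]
      linear_combination (m * (γ / (1 - γ))) * hcoeff
  · intro hLz
    have hyq : (l * q) ^ (-γ) ≤ y := by rw [hthreshold, hy_def]; gcongr
    refine ⟨?_, by simp [hF]⟩
    rw [hF']
    exact ((isMaxOn_powerDualObjective_of_rpow_le hγ0.le hγ1 (by positivity) hyq).comp_mapsTo
      (fun B hB ↦ mem_Ici.mpr (by nlinarith [mem_Ici.mp hB])) (by ring)).comp_mono hmono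
end

section
/- Let θ, ρ, m ∈ ℝ, r > 0, ρ + m > r, h > 0, and let α₁ < 0 be a root of (1/2)θ²α² + (ρ − r + m − (1/2)θ²)α − (ρ + m) = 0. Let A > 0 (in the paper, A = m·u(l·B̄) − m·u(q) with B̄ = B + q). Define b̄ := A·r·α₁/((ρ+m)·h·(α₁−1)), C̄₁ := −(h/(r·α₁))·b̄^{1−α₁}, and w̄(z) := C̄₁·z^{α₁} + h·z/r − A/(ρ+m) for z > 0. Then: (i) b̄ > 0 and C̄₁ > 0; (ii) w̄(b̄) = 0 and w̄'(b̄) = 0; (iii) for all z > 0, (1/2)θ²z²·w̄''(z) + (ρ−r+m)·z·w̄'(z) − (ρ+m)·w̄(z) = −h·z + A; (iv) w̄(z) ≥ 0 for all z ≥ b̄; and (v) h·z − A ≤ 0 for all z ∈ (0, b̄]. -/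
/-!
Every function `C z^α + a z + c` with `α` a root of the characteristic quadratic solves the
inhomogeneous Euler equation, and the choice of `b̄` and `C̄₁` is exactly smooth fit at `b̄`.
Since `C̄₁ α₁ < 0` and `α₁ - 1 < 0`, the derivative `C̄₁ α₁ z^{α₁-1} + h/r` increases in `z`,
so it is nonnegative beyond the point `b̄` where it vanishes; hence `w̄ ≥ w̄(b̄) = 0` on `[b̄, ∞)`.
Finally `h b̄ = A κ` with `κ = r α₁ / ((ρ+m)(α₁-1)) ∈ (0,1)` because `r < ρ + m`.
-/

open Real Set Filter Topology

theorem div_mul_sub_one_mem_Ioo {r β α : ℝ} (hr : 0 < r) (hrβ : r < β) (hα : α < 0) :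
    r * α / (β * (α - 1)) ∈ Ioo 0 1 := by
  have hden : β * (α - 1) < 0 := mul_neg_of_pos_of_neg (hr.trans hrβ) (by linarith)
  refine ⟨div_pos_of_neg_of_neg (mul_neg_of_pos_of_neg hr hα) hden, ?_⟩
  rw [div_lt_one_of_neg hden]
  nlinarith

section RpowAddLinear

variable {C α a c : ℝ} {w : ℝ → ℝ}

theorem hasDerivAt_rpow_add_linear (hw : ∀ z, w z = C * z ^ α + a * z + c) {z : ℝ}
    (hz : 0 < z) : HasDerivAt w (C * α * z ^ (α - 1) + a) z := by
  rw [show w = fun z => C * z ^ α + a * z + c from funext hw]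
  have hpow := (hasDerivAt_rpow_const (p := α) (Or.inl hz.ne')).const_mul C
  have hlin : HasDerivAt (fun y => a * y) a z := by simpa using (hasDerivAt_id z).const_mul a
  exact ((hpow.add hlin).add_const c).congr_deriv (by ring)

theorem deriv_deriv_rpow_add_linear (hw : ∀ z, w z = C * z ^ α + a * z + c) {z : ℝ}
    (hz : 0 < z) : deriv (deriv w) z = C * α * (α - 1) * z ^ (α - 2) := by
  have hderiv : deriv w =ᶠ[𝓝 z] fun y => C * α * y ^ (α - 1) + a := by
    filter_upwards [Ioi_mem_nhds hz] with y hy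
    exact (hasDerivAt_rpow_add_linear hw hy).deriv
  rw [hderiv.deriv_eq]
  have hpow := ((hasDerivAt_rpow_const (p := α - 1) (Or.inl hz.ne')).const_mul (C * α)).add_const a
  rw [hpow.deriv, show α - 1 - 1 = α - 2 by ring]
  ring

theorem euler_rpow_add_linear (hw : ∀ z, w z = C * z ^ α + a * z + c) {θ μ β : ℝ}
    (hroot : 1/2 * θ^2 * α^2 + (μ - 1/2 * θ^2) * α - β = 0) {z : ℝ} (hz : 0 < z) :
    1/2 * θ^2 * z^2 * deriv (deriv w) z + μ * z * deriv w z - β * w z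
      = (μ - β) * a * z - β * c := by
  rw [deriv_deriv_rpow_add_linear hw hz, (hasDerivAt_rpow_add_linear hw hz).deriv, hw]
  have h1 : z ^ (α - 1) * z = z ^ α := by
    rw [← rpow_add_one hz.ne', sub_add_cancel]
  have h2 : z ^ (α - 2) * z = z ^ (α - 1) := by
    rw [← rpow_add_one hz.ne']
    ring_nf
  rw [← h1, ← h2]
  linear_combination (C * z ^ (α - 2) * z ^ 2) * hroot

theorem monotoneOn_Ici_rpow_add_linear (hw : ∀ z, w z = C * z ^ α + a * z + c) {b : ℝ}
    (hb : 0 < b) (hCα : C * α ≤ 0) (hα : α ≤ 1) (hfit : C * α * b ^ (α - 1) + a = 0) :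
    MonotoneOn w (Ici b) := by
  have hdiff : ∀ x ∈ Ici b, HasDerivAt w (C * α * x ^ (α - 1) + a) x :=
    fun x hx => hasDerivAt_rpow_add_linear hw (hb.trans_le hx)
  refine monotoneOn_of_deriv_nonneg (convex_Ici b)
    (fun x hx => (hdiff x hx).continuousAt.continuousWithinAt)
    (fun x hx => (hdiff x (interior_subset hx)).differentiableAt.differentiableWithinAt)
    fun x hx => ?_
  rw [interior_Ici] at hx
  have hpow : x ^ (α - 1) ≤ b ^ (α - 1) := rpow_le_rpow_of_nonpos hb hx.le (by linarith)
  rw [(hdiff x (mem_Ici.2 hx.le)).deriv, ← hfit]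
  linarith [mul_le_mul_of_nonpos_left hpow hCα]

theorem smooth_fit_rpow_add_linear (hw : ∀ z, w z = C * z ^ α + a * z + c) {b : ℝ}
    (hb : 0 < b) (hα : α ≠ 0) (hC : C = -(a / α) * b ^ (1 - α)) :
    C * α * b ^ (α - 1) + a = 0 ∧ w b = a * b * (1 - α⁻¹) + c := by
  constructor
  · rw [hC, mul_right_comm _ _ α, mul_assoc, ← rpow_add hb, sub_add_sub_cancel', sub_self,
      rpow_zero]
    field_simp
    ring
  · rw [hw, hC, mul_assoc, ← rpow_add hb, sub_add_cancel, rpow_one]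
    ring

end RpowAddLinear

/-- Theorem 5.1 (predetermined bequest with reserved inheritance, constant mortality):
with `b̄ := Arα₁/((ρ+m)h(α₁−1))`, `C̄₁ := −(h/(rα₁)) b̄^{1−α₁}` and
`w̄(z) := C̄₁ z^{α₁} + hz/r − A/(ρ+m)`, one has `b̄ > 0`, `C̄₁ > 0`, smooth fit at `b̄`,
the ODE identity `(𝕃_Z − (ρ+m))w̄ = −hz + A` on `(0,∞)`, `w̄ ≥ 0` on `[b̄,∞)`, and
`hz − A ≤ 0` on `(0,b̄]`. -/
theorem stmt_18 (θ ρ m r h α₁ A b C₁ : ℝ) (hr : 0 < r) (hρm : r < ρ + m) (hh : 0 < h)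
    (hα : α₁ < 0)
    (hroot : 1/2 * θ^2 * α₁^2 + (ρ - r + m - 1/2 * θ^2) * α₁ - (ρ + m) = 0)
    (hA : 0 < A)
    (hb : b = A * r * α₁ / ((ρ + m) * h * (α₁ - 1)))
    (hC : C₁ = -(h/(r*α₁)) * b ^ (1 - α₁))
    (w : ℝ → ℝ) (hw : ∀ z : ℝ, w z = C₁ * z ^ α₁ + h * z / r - A / (ρ + m)) :
    (0 < b ∧ 0 < C₁) ∧
    (w b = 0 ∧ deriv w b = 0) ∧
    (∀ z : ℝ, 0 < z →
      1/2 * θ^2 * z^2 * deriv (deriv w) z + (ρ - r + m) * z * deriv w z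
        - (ρ + m) * w z = -h * z + A) ∧
    (∀ z : ℝ, b ≤ z → 0 ≤ w z) ∧
    (∀ z : ℝ, 0 < z → z ≤ b → h * z - A ≤ 0) := by
  have hβ : 0 < ρ + m := hr.trans hρm
  have hα0 : α₁ ≠ 0 := hα.ne
  have hα1 : α₁ - 1 ≠ 0 := (sub_neg.2 (hα.trans one_pos)).ne
  obtain ⟨hκ0, hκ1⟩ := div_mul_sub_one_mem_Ioo hr hρm hα
  have hhb : h * b = A * (r * α₁ / ((ρ + m) * (α₁ - 1))) := by
    rw [hb]; field_simp
  have hb0 : 0 < b := pos_of_mul_pos_right (hhb ▸ mul_pos hA hκ0) hh.le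
  rw [← div_div] at hC
  have hC0 : 0 < C₁ := hC ▸ mul_pos (neg_pos.2 (div_neg_of_pos_of_neg (div_pos hh hr) hα))
    (rpow_pos_of_pos hb0 _)
  have hw' : ∀ z, w z = C₁ * z ^ α₁ + h / r * z + -(A / (ρ + m)) := fun z => by
    rw [hw]; ring
  obtain ⟨hfit, hwb⟩ := smooth_fit_rpow_add_linear hw' hb0 hα0 hC
  replace hwb : w b = 0 := by
    rw [hwb, hb]
    field_simp
    ring
  refine ⟨⟨hb0, hC0⟩, ⟨hwb, ?_⟩, fun z hz => ?_, fun z hz => ?_, fun z _ hzb => ?_⟩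
  · rw [(hasDerivAt_rpow_add_linear hw' hb0).deriv, hfit]
  · rw [euler_rpow_add_linear hw' hroot hz]
    field_simp
    ring
  · exact hwb ▸ monotoneOn_Ici_rpow_add_linear hw' hb0
      (mul_neg_of_pos_of_neg hC0 hα).le (hα.trans one_pos).le hfit
      self_mem_Ici hz hz
  · nlinarith [mul_le_mul_of_nonneg_left hzb hh.le]
end
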